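/- Let k be an algebraically closed field of characteristic 2 and let f̃ = x² + y³ + z·y² ∈ k[x,y,z]. Let (a,b,c) ∈ k³ satisfy a² + b³ + c·b² = 0. Then the k-algebras k⟦x,y,z⟧/(f̃(x+a, y+b, z+c)) and k⟦x,y,z⟧/(f̃) are isomorphic if and only if a = 0 and b = 0. In other words, the isosingular locus at the origin of the hypersurface defined by f̃ consists exactly of the points of the z-axis. -/

import Mathlib

/-!
If `b ≠ 0`, the translated equation has linear part `b²(y + z) ≠ 0`, whereas `f̃` lies in
`m²`: the two quotients are told apart by their cotangent spaces `m / (m² + (f))`. An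
isomorphism `e` preserves the maximal ideals, so it transports linear parts through the
endomorphism `T` of `k³` whose columns are the linear parts of lifts of the `e(x_j)`. Every
vector is reached, so `T` is bijective, and `T` sends the linear part of the translated equation
to that of `0`. Hence `b = 0`, and then `a² = 0`.

Conversely, at `(0, 0, c)` the shear `x ↦ x + √c·y` carries `x² + y³ + (z + c)·y²` to `f̃`,
since `(x + √c·y)² = x² + c·y²` in characteristic `2`.
-/

open MvPowerSeries

/-- The polynomial `f(x + a)` obtained from `f` by translating the variables by `a`. -/
noncomputable def translatePoly {N : ℕ} {k : Type*} [CommRing k]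
    (a : Fin N → k) (f : MvPolynomial (Fin N) k) : MvPolynomial (Fin N) k :=
  MvPolynomial.aeval (fun j => MvPolynomial.X j + MvPolynomial.C (a j)) f

namespace MvPowerSeries

section LinearPart

variable {σ R : Type*} [CommRing R]

noncomputable def linearPart : MvPowerSeries σ R →ₗ[R] σ → R :=
  LinearMap.pi fun i => coeff (Finsupp.single i 1)

lemma linearPart_apply (F : MvPowerSeries σ R) (i : σ) :
    linearPart F i = coeff (Finsupp.single i 1) F := rfl

lemma linearPart_mul (F G : MvPowerSeries σ R) :
    linearPart (F * G) = constantCoeff F • linearPart G + constantCoeff G • linearPart F := by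
  classical
  ext i
  simp [linearPart_apply, coeff_mul, Finset.Nat.antidiagonal_succ,
    coeff_zero_eq_constantCoeff_apply]
  ring

lemma linearPart_X [DecidableEq σ] (i : σ) :
    linearPart (X i : MvPowerSeries σ R) = Pi.single i 1 := by
  ext j
  simp [linearPart_apply, coeff_X, Pi.single_apply, Finsupp.single_left_inj]

lemma linearPart_C (r : R) : linearPart (C r : MvPowerSeries σ R) = 0 := by
  classical
  ext j
  rw [linearPart_apply, coeff_C, if_neg (Finsupp.single_ne_zero.mpr one_ne_zero), Pi.zero_apply]

lemma exists_eq_sum_X_mul_of_coeff_eq_zero [DecidableEq σ] (s : Finset σ) {W : MvPowerSeries σ R}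
    (hW : ∀ n : σ →₀ ℕ, (∀ i ∈ s, n i = 0) → coeff n W = 0) :
    ∃ B : σ → MvPowerSeries σ R, W = ∑ i ∈ s, X i * B i := by
  induction s using Finset.induction_on generalizing W with
  | empty => exact ⟨0, by ext n; simpa using hW n⟩
  | insert j s hj ih =>
    let W' : MvPowerSeries σ R := fun n => if n j = 0 then coeff n W else 0
    obtain ⟨B, hB⟩ := ih (W := W') fun n hn => by
      show (if n j = 0 then coeff n W else 0) = 0
      split_ifs with hnj
      · exact hW n (Finset.forall_mem_insert _ _ _ |>.mpr ⟨hnj, hn⟩)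
      · rfl
    obtain ⟨D, hD⟩ : X j ∣ W - W' := X_dvd_iff.mpr fun n hn => by
      show coeff n W - (if n j = 0 then coeff n W else 0) = 0
      simp [hn]
    refine ⟨Function.update B j D, ?_⟩
    rw [Finset.sum_insert hj, Function.update_self, ← hD,
      Finset.sum_congr rfl fun i hi => by rw [Function.update_of_ne (ne_of_mem_of_not_mem hi hj)],
      ← hB, sub_add_cancel]

lemma exists_eq_sum_X_mul [Fintype σ] {W : MvPowerSeries σ R} (hW : constantCoeff W = 0) :
    ∃ B : σ → MvPowerSeries σ R, W = ∑ i, X i * B i := by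
  classical
  refine exists_eq_sum_X_mul_of_coeff_eq_zero Finset.univ fun n hn => ?_
  obtain rfl : n = 0 := Finsupp.ext fun i => hn i (Finset.mem_univ i)
  simpa using hW

end LinearPart

section Quotient

variable {σ k : Type*} [Field k]

lemma isUnit_mk_span_singleton_iff {f : MvPowerSeries σ k} (hf : constantCoeff f = 0)
    {W : MvPowerSeries σ k} :
    IsUnit (Ideal.Quotient.mk (Ideal.span {f}) W) ↔ constantCoeff W ≠ 0 := by
  refine ⟨fun h => ?_, fun h => (isUnit_iff_constantCoeff.mpr h.isUnit).map _⟩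
  have hker : Ideal.span {f} ≤ RingHom.ker (constantCoeff (σ := σ) (R := k)) :=
    Ideal.span_singleton_le_iff_mem _ |>.mpr hf
  simpa using h.map (Ideal.Quotient.lift _ constantCoeff fun a ha => RingHom.mem_ker.mp (hker ha))

variable {f g : MvPowerSeries σ k}

-- `e` preserves non-units, which are the classes of series with zero constant coefficient.
lemma constantCoeff_eq_of_mk_eq_algEquiv (hf : constantCoeff f = 0) (hg : constantCoeff g = 0)
    (e : (MvPowerSeries σ k ⧸ Ideal.span {f}) ≃ₐ[k] (MvPowerSeries σ k ⧸ Ideal.span {g}))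
    {W V : MvPowerSeries σ k}
    (h : Ideal.Quotient.mk _ V = e (Ideal.Quotient.mk _ W)) :
    constantCoeff V = constantCoeff W := by
  have hW : ¬ IsUnit (Ideal.Quotient.mk (Ideal.span {f}) (W - C (constantCoeff W))) := by
    rw [isUnit_mk_span_singleton_iff hf]
    simp
  have hV : Ideal.Quotient.mk (Ideal.span {g}) (V - C (constantCoeff W)) =
      e (Ideal.Quotient.mk _ (W - C (constantCoeff W))) := by
    simp only [map_sub, h, c_eq_algebraMap, Ideal.Quotient.mk_algebraMap, AlgEquiv.commutes]
  rw [← MulEquiv.isUnit_map e.toMulEquiv] at hW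
  have hVW := mt (isUnit_mk_span_singleton_iff hg).mpr (hV ▸ hW)
  simpa [sub_eq_zero] using hVW

lemma linearPart_eq_of_mk_eq (hg₀ : constantCoeff g = 0) (hg₁ : linearPart g = 0)
    {V V' : MvPowerSeries σ k}
    (h : Ideal.Quotient.mk (Ideal.span {g}) V = Ideal.Quotient.mk _ V') :
    linearPart V = linearPart V' := by
  obtain ⟨q, hq⟩ := Ideal.mem_span_singleton'.mp (Ideal.Quotient.eq.mp h)
  rw [← sub_eq_zero, ← map_sub, ← hq, linearPart_mul, hg₀, hg₁, smul_zero, zero_smul,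
    add_zero]

lemma linearPart_eq_of_mk_eq_algEquiv [Fintype σ] (hf : constantCoeff f = 0)
    (hg₀ : constantCoeff g = 0) (hg₁ : linearPart g = 0)
    (e : (MvPowerSeries σ k ⧸ Ideal.span {f}) ≃ₐ[k] (MvPowerSeries σ k ⧸ Ideal.span {g}))
    {U : σ → MvPowerSeries σ k}
    (hU : ∀ j, Ideal.Quotient.mk _ (U j) = e (Ideal.Quotient.mk _ (X j)))
    {W V : MvPowerSeries σ k} (h : Ideal.Quotient.mk _ V = e (Ideal.Quotient.mk _ W)) :
    linearPart V = ∑ j, linearPart W j • linearPart (U j) := by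
  classical
  obtain ⟨B, hB⟩ := exists_eq_sum_X_mul (W := W - C (constantCoeff W)) (by simp)
  set w := constantCoeff W
  choose D hD using fun j => Ideal.Quotient.mk_surjective (e (Ideal.Quotient.mk _ (B j)))
  have hWB : ∀ j, linearPart W j = constantCoeff (B j) := fun j => by
    simpa [linearPart_mul, linearPart_X, linearPart_C, Pi.single_apply] using
      congrArg (fun F => linearPart F j) hB
  have hV : Ideal.Quotient.mk (Ideal.span {g}) V =
      Ideal.Quotient.mk _ (C w + ∑ j, U j * D j) := by
    rw [h, eq_add_of_sub_eq' hB]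
    simp only [map_add, map_sum, map_mul, hU, hD, c_eq_algebraMap, Ideal.Quotient.mk_algebraMap,
      AlgEquiv.commutes]
  rw [linearPart_eq_of_mk_eq hg₀ hg₁ hV]
  simp [linearPart_mul, linearPart_C, hWB, constantCoeff_eq_of_mk_eq_algEquiv hf hg₀ e (hU _),
    constantCoeff_eq_of_mk_eq_algEquiv hf hg₀ e (hD _)]

theorem linearPart_eq_zero_of_algEquiv [Fintype σ] (hf : constantCoeff f = 0)
    (hg₀ : constantCoeff g = 0) (hg₁ : linearPart g = 0)
    (e : (MvPowerSeries σ k ⧸ Ideal.span {f}) ≃ₐ[k]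
      (MvPowerSeries σ k ⧸ Ideal.span {g})) :
    linearPart f = 0 := by
  classical
  choose U hU using fun j => Ideal.Quotient.mk_surjective (e (Ideal.Quotient.mk _ (X j)))
  set T := Fintype.linearCombination k fun j => linearPart (U j)
  have hT : ∀ {W V}, Ideal.Quotient.mk _ V = e (Ideal.Quotient.mk _ W) →
      linearPart V = T (linearPart W) := fun h => by
    rw [linearPart_eq_of_mk_eq_algEquiv hf hg₀ hg₁ e hU h, Fintype.linearCombination_apply]
  have hT_surj : Function.Surjective T := by
    intro v
    obtain ⟨W, hW⟩ :=
      Ideal.Quotient.mk_surjective (e.symm (Ideal.Quotient.mk _ (∑ i, v i • X i)))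
    refine ⟨linearPart W, ?_⟩
    rw [← hT (by rw [hW, e.apply_symm_apply])]
    simp only [map_sum, map_smul, linearPart_X]
    exact (pi_eq_sum_univ' v).symm
  have hf_mk : Ideal.Quotient.mk (Ideal.span {g}) 0 = e (Ideal.Quotient.mk _ f) := by
    rw [map_zero, Ideal.Quotient.eq_zero_iff_mem.mpr (Ideal.mem_span_singleton_self f), map_zero]
  exact LinearMap.injective_iff_surjective.mpr hT_surj (by rw [← hT hf_mk, map_zero, map_zero])

end Quotient

section Shear

variable {σ R : Type*} [CommRing R] [DecidableEq σ]

noncomputable def shear (i j : σ) (t : R) : σ → MvPowerSeries σ R :=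
  Function.update X i (X i + C t * X j)

lemma shear_self (i j : σ) (t : R) : shear i j t i = X i + C t * X j :=
  Function.update_self ..

lemma shear_of_ne {i l : σ} (hl : l ≠ i) (j : σ) (t : R) : shear i j t l = X l :=
  Function.update_of_ne hl ..

variable [Finite σ]

lemma hasSubst_shear (i j : σ) (t : R) : HasSubst (shear i j t) :=
  hasSubst_of_constantCoeff_zero fun l => by
    rcases eq_or_ne l i with rfl | hl
    · simp [shear_self]
    · simp [shear_of_ne hl]

lemma substAlgHom_shear_comp_shear {i j : σ} (hij : i ≠ j) (t : R) :
    (substAlgHom (R := R) (hasSubst_shear i j (-t))).comp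
      (substAlgHom (R := R) (hasSubst_shear i j t)) = AlgHom.id R (MvPowerSeries σ R) := by
  have h := substAlgHom_comp_substAlgHom (R := R) (S := R) (T := R) (hasSubst_shear i j t)
    (hasSubst_shear i j (-t))
  have hX : (fun l => substAlgHom (R := R) (hasSubst_shear i j (-t)) (shear i j t l)) = X := by
    ext1 l
    rcases eq_or_ne l i with rfl | hl
    · rw [shear_self, map_add, map_mul, substAlgHom_X, substAlgHom_X, shear_self,
        shear_of_ne hij.symm, c_eq_algebraMap, AlgHom.commutes, ← c_eq_algebraMap, map_neg]
      ring
    · rw [shear_of_ne hl, substAlgHom_X, shear_of_ne hl]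
  simp only [coe_substAlgHom] at hX
  refine AlgHom.ext fun F => ?_
  simpa [hX, subst_self] using DFunLike.congr_fun h F

noncomputable def shearAlgEquiv {i j : σ} (hij : i ≠ j) (t : R) :
    MvPowerSeries σ R ≃ₐ[R] MvPowerSeries σ R :=
  AlgEquiv.ofAlgHom (substAlgHom (hasSubst_shear i j t)) (substAlgHom (hasSubst_shear i j (-t)))
    (by simpa using substAlgHom_shear_comp_shear hij (-t)) (substAlgHom_shear_comp_shear hij t)

lemma shearAlgEquiv_X {i j : σ} (hij : i ≠ j) (t : R) (l : σ) :
    shearAlgEquiv hij t (X l) = shear i j t l :=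
  substAlgHom_X (hasSubst_shear i j t) l

lemma shearAlgEquiv_C {i j : σ} (hij : i ≠ j) (t r : R) :
    shearAlgEquiv hij t (C r) = C r :=
  (shearAlgEquiv hij t).commutes r

end Shear

end MvPowerSeries

section CuspFamily

variable {k : Type*} [Field k]

noncomputable def cuspFamily (k : Type*) [Field k] : MvPolynomial (Fin 3) k :=
  MvPolynomial.X 0 ^ 2 + MvPolynomial.X 1 ^ 3 + MvPolynomial.X 2 * MvPolynomial.X 1 ^ 2

lemma coe_cuspFamily : ((cuspFamily k : MvPolynomial (Fin 3) k) : MvPowerSeries (Fin 3) k) =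
    X 0 ^ 2 + X 1 ^ 3 + X 2 * X 1 ^ 2 := by
  simp [cuspFamily]

lemma coe_translatePoly_cuspFamily (a b c : k) :
    ((translatePoly ![a, b, c] (cuspFamily k) : MvPolynomial (Fin 3) k) : MvPowerSeries (Fin 3) k) =
      (X 0 + C a) ^ 2 + (X 1 + C b) ^ 3 + (X 2 + C c) * (X 1 + C b) ^ 2 := by
  simp [translatePoly, cuspFamily]

lemma constantCoeff_translatePoly_cuspFamily (a b c : k) :
    constantCoeff ((translatePoly ![a, b, c] (cuspFamily k) : MvPolynomial (Fin 3) k) :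
      MvPowerSeries (Fin 3) k) = a ^ 2 + b ^ 3 + c * b ^ 2 := by
  simp [coe_translatePoly_cuspFamily]

lemma linearPart_translatePoly_cuspFamily_two (a b c : k) :
    linearPart ((translatePoly ![a, b, c] (cuspFamily k) : MvPolynomial (Fin 3) k) :
      MvPowerSeries (Fin 3) k) 2 = b ^ 2 := by
  simp [coe_translatePoly_cuspFamily, linearPart_mul, pow_succ, linearPart_X, linearPart_C]

lemma linearPart_cuspFamily :
    linearPart ((cuspFamily k : MvPolynomial (Fin 3) k) : MvPowerSeries (Fin 3) k) = 0 := by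
  simp [coe_cuspFamily, linearPart_mul, pow_succ, linearPart_X]

lemma shearAlgEquiv_translatePoly_cuspFamily [CharP k 2] {c s : k} (hs : s ^ 2 = c) :
    shearAlgEquiv (show (0 : Fin 3) ≠ 1 by decide) s
      ((translatePoly ![0, 0, c] (cuspFamily k) : MvPolynomial (Fin 3) k) :
        MvPowerSeries (Fin 3) k) =
      ((cuspFamily k : MvPolynomial (Fin 3) k) : MvPowerSeries (Fin 3) k) := by
  have h2 : (2 : MvPowerSeries (Fin 3) k) = 0 := by
    rw [← map_ofNat C, CharTwo.two_eq_zero, map_zero]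
  rw [coe_translatePoly_cuspFamily, coe_cuspFamily, map_zero, add_zero, add_zero, ← hs, map_pow]
  simp only [map_add, map_mul, map_pow, shearAlgEquiv_X, shearAlgEquiv_C, shear_self,
    shear_of_ne (show (1 : Fin 3) ≠ 0 by decide), shear_of_ne (show (2 : Fin 3) ≠ 0 by decide)]
  linear_combination (C s * X 0 * X 1 + C s ^ 2 * X 1 ^ 2) * h2

lemma eq_zero_of_algEquiv_translatePoly_cuspFamily {a b c : k}
    (habc : a ^ 2 + b ^ 3 + c * b ^ 2 = 0)
    (e : (MvPowerSeries (Fin 3) k ⧸ Ideal.span {((translatePoly ![a, b, c] (cuspFamily k) :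
        MvPolynomial (Fin 3) k) : MvPowerSeries (Fin 3) k)}) ≃ₐ[k]
      (MvPowerSeries (Fin 3) k ⧸ Ideal.span {((cuspFamily k : MvPolynomial (Fin 3) k) :
        MvPowerSeries (Fin 3) k)})) :
    a = 0 ∧ b = 0 := by
  have hlin := congrFun (linearPart_eq_zero_of_algEquiv
    (by rw [constantCoeff_translatePoly_cuspFamily, habc]) (by simp [coe_cuspFamily])
    linearPart_cuspFamily e) 2
  rw [linearPart_translatePoly_cuspFamily_two, Pi.zero_apply] at hlin
  obtain rfl := pow_eq_zero_iff two_ne_zero |>.mp hlin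
  exact ⟨pow_eq_zero_iff two_ne_zero |>.mp (by simpa using habc), rfl⟩

lemma nonempty_algEquiv_translatePoly_cuspFamily [IsAlgClosed k] [CharP k 2] (c : k) :
    Nonempty ((MvPowerSeries (Fin 3) k ⧸ Ideal.span {((translatePoly ![0, 0, c] (cuspFamily k) :
        MvPolynomial (Fin 3) k) : MvPowerSeries (Fin 3) k)}) ≃ₐ[k]
      (MvPowerSeries (Fin 3) k ⧸ Ideal.span {((cuspFamily k : MvPolynomial (Fin 3) k) :
        MvPowerSeries (Fin 3) k)})) := by
  obtain ⟨s, hs⟩ := IsAlgClosed.exists_pow_nat_eq c two_pos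
  refine ⟨Ideal.quotientEquivAlg _ _ (shearAlgEquiv (show (0 : Fin 3) ≠ 1 by decide) s) ?_⟩
  rw [Ideal.map_span, Set.image_singleton]
  exact congrArg (fun F => Ideal.span {F}) (shearAlgEquiv_translatePoly_cuspFamily hs).symm

end CuspFamily

/-- For `f̃ = x² + y³ + z·y²` over an algebraically closed field of characteristic `2`
and a point `(a,b,c)` on `V(f̃)`, the complete local rings `k⟦x,y,z⟧/(f̃(x+a, y+b, z+c))`
and `k⟦x,y,z⟧/(f̃)` are isomorphic as `k`-algebras iff `a = 0` and `b = 0`: the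
isosingular locus at the origin is exactly the `z`-axis. -/
theorem stmt_19 (k : Type) [Field k] [IsAlgClosed k] [CharP k 2]
    (a b c : k) (habc : a ^ 2 + b ^ 3 + c * b ^ 2 = 0) :
    Nonempty
      ((MvPowerSeries (Fin 3) k ⧸
          Ideal.span {((translatePoly ![a, b, c]
              (MvPolynomial.X 0 ^ 2 + MvPolynomial.X 1 ^ 3 +
                MvPolynomial.X 2 * MvPolynomial.X 1 ^ 2) :
            MvPolynomial (Fin 3) k) : MvPowerSeries (Fin 3) k)}) ≃ₐ[k]
       (MvPowerSeries (Fin 3) k ⧸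
          Ideal.span {((MvPolynomial.X 0 ^ 2 + MvPolynomial.X 1 ^ 3 +
              MvPolynomial.X 2 * MvPolynomial.X 1 ^ 2 :
            MvPolynomial (Fin 3) k) : MvPowerSeries (Fin 3) k)})) ↔
      a = 0 ∧ b = 0 := by
  constructor
  · rintro ⟨e⟩
    exact eq_zero_of_algEquiv_translatePoly_cuspFamily habc e
  · rintro ⟨rfl, rfl⟩
    exact nonempty_algEquiv_translatePoly_cuspFamily c
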